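/- Let n, m ≥ 1, c, b̌₁, b̌₂ > 0, and let A₁, A₂ : ℕ × ℕ → M_n(ℝ), a₁, a₂ : ℕ × ℕ → ℝ with a₁, a₂ ≥ 0, Q₁, Q₂ : ℕ × ℕ → M_n(ℝ) with positive semidefinite values, C : ℕ × ℕ → M_{m×n}(ℝ), Θ₀ : ℕ × ℕ → M_m(ℝ) with positive definite values, D : ℕ × ℕ → M_m(ℝ), H₁,…,H_r ∈ M_{n×m}(ℝ), and β₁,…,β_r ≥ 0. For δ : ℕ × ℕ → M_m(ℝ) with positive semidefinite values, define recursively Ξ_u^δ : ℕ × ℕ → M_n(ℝ) by prescribed boundary values Ξ_u^δ(l,0) = G_h(l) and Ξ_u^δ(0,k) = G_v(k) (positive semidefinite, independent of δ), and for l, k ≥ 1: Ξ_p^δ(l,k) = (1 + b̌₁) Φ₁(Ξ_u^δ)(l,k−1) + (1 + b̌₁⁻¹) Φ₂(Ξ_u^δ)(l−1,k) + Q₁(l,k−1) + Q₂(l−1,k), where Φ_ι(M)(l,k) = (1 + b̌₂) a_ι(l,k)² tr(M(l,k)) I + (1 + b̌₂⁻¹) A_ι(l,k) M(l,k) A_ι(l,k)ᵀ,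 and Ξ_u^δ(l,k) = (1 + c) Ξ_p^δ(l,k) − (1 + c)² Ξ_p^δ(l,k) C(l,k)ᵀ F_δ(l,k)⁻¹ C(l,k) Ξ_p^δ(l,k) + Σ_{ν=1}^{r} β_ν H_ν F_δ(l,k) H_νᵀ with F_δ(l,k) = Θ₀(l,k) + D(l,k) δ(l,k) D(l,k)ᵀ + (1 + c) C(l,k) Ξ_p^δ(l,k) C(l,k)ᵀ. If δ¹(l,k) ⪯ δ²(l,k) for all (l,k), then Ξ_u^{δ¹}(l,k) ⪯ Ξ_u^{δ²}(l,k) for all (l,k) ∈ ℕ × ℕ. -/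

import Mathlib

open Matrix

/-- The one-step map `Φ_ι(M)(l,k) = (1 + b̌₂) a_ι(l,k)² tr(M(l,k)) I
+ (1 + b̌₂⁻¹) A_ι(l,k) M(l,k) A_ι(l,k)ᵀ` of the prediction step. -/
noncomputable def predMap {n : ℕ} (cb₂ : ℝ)
    (A : ℕ × ℕ → Matrix (Fin n) (Fin n) ℝ) (a : ℕ × ℕ → ℝ)
    (M : ℕ × ℕ → Matrix (Fin n) (Fin n) ℝ) (p : ℕ × ℕ) :
    Matrix (Fin n) (Fin n) ℝ :=
  ((1 + cb₂) * (a p) ^ 2 * (M p).trace) • (1 : Matrix (Fin n) (Fin n) ℝ)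
    + (1 + cb₂⁻¹) • (A p * M p * (A p)ᵀ)

/-- The innovation matrix `F_δ(l,k) = Θ₀(l,k) + D(l,k) δ(l,k) D(l,k)ᵀ
+ (1 + c) C(l,k) Ξ_p(l,k) C(l,k)ᵀ`. -/
noncomputable def innovMatδ {n m : ℕ} (c : ℝ)
    (C : ℕ × ℕ → Matrix (Fin m) (Fin n) ℝ)
    (Θ₀ D : ℕ × ℕ → Matrix (Fin m) (Fin m) ℝ)
    (δ : ℕ × ℕ → Matrix (Fin m) (Fin m) ℝ)
    (Ξp : ℕ × ℕ → Matrix (Fin n) (Fin n) ℝ) (p : ℕ × ℕ) :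
    Matrix (Fin m) (Fin m) ℝ :=
  Θ₀ p + D p * δ p * (D p)ᵀ + (1 + c) • (C p * Ξp p * (C p)ᵀ)

/-- The minimized update `Ξ_u(l,k) = (1 + c) Ξ_p(l,k)
- (1 + c)² Ξ_p(l,k) C(l,k)ᵀ F_δ(l,k)⁻¹ C(l,k) Ξ_p(l,k)
+ Σ_ν β_ν H_ν F_δ(l,k) H_νᵀ`. -/
noncomputable def updateδ {n m r : ℕ} (c : ℝ)
    (C : ℕ × ℕ → Matrix (Fin m) (Fin n) ℝ)
    (Θ₀ D : ℕ × ℕ → Matrix (Fin m) (Fin m) ℝ)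
    (H : Fin r → Matrix (Fin n) (Fin m) ℝ) (β : Fin r → ℝ)
    (δ : ℕ × ℕ → Matrix (Fin m) (Fin m) ℝ)
    (Ξp : ℕ × ℕ → Matrix (Fin n) (Fin n) ℝ) (p : ℕ × ℕ) :
    Matrix (Fin n) (Fin n) ℝ :=
  (1 + c) • Ξp p
    - ((1 + c) ^ 2) • (Ξp p * (C p)ᵀ * (innovMatδ c C Θ₀ D δ Ξp p)⁻¹ * C p * Ξp p)
    + ∑ ν : Fin r, β ν • (H ν * innovMatδ c C Θ₀ D δ Ξp p * (H ν)ᵀ)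

open scoped MatrixOrder

/-!
The update is `min_K J(δ, Ξ_p, K) + Σ_ν β_ν H_ν F_δ H_νᵀ` with
`J(δ, Ξ_p, K) = (1 + c)(I - K C) Ξ_p (I - K C)ᵀ + K (Θ₀ + D δ Dᵀ) Kᵀ`. For a fixed gain `K`, `J` is
monotone in `(δ, Ξ_p)`, and completing the square in `K` shows that the minimum is attained at
`K* = (1 + c) Ξ_p Cᵀ F_δ⁻¹`, so `min J₁ ≤ J₁(K₂*) ≤ J₂(K₂*) = min J₂`. The perturbation terms are
monotone because `F_δ` is, and so is the prediction step. An induction over the grid concludes;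
it carries `0 ⪯ Ξ_u^{δ¹}` along with `Ξ_u^{δ¹} ⪯ Ξ_u^{δ²}`, since completing the square needs
`F_δ` to be positive definite.
-/

namespace Matrix

variable {m n : Type*}

theorem transpose_eq_self_of_nonneg {P : Matrix m m ℝ} (h : 0 ≤ P) : Pᵀ = P :=
  (isHermitian_iff_isSymm.mp h.posSemidef.1).eq

variable [Fintype m]

theorem sub_mul_inv_mul_mul_transpose_sub_mul_inv {α : Type*} [CommRing α] [DecidableEq m]
    {F : Matrix m m α} (hFt : Fᵀ = F) (hF : IsUnit F.det) (K G : Matrix n m α) :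
    (K - G * F⁻¹) * F * (K - G * F⁻¹)ᵀ = K * F * Kᵀ - K * Gᵀ - G * Kᵀ + G * F⁻¹ * Gᵀ := by
  have hFinv : (F⁻¹)ᵀ = F⁻¹ := by rw [transpose_nonsing_inv, hFt]
  rw [Matrix.sub_mul, nonsing_inv_mul_cancel_right F G hF, transpose_sub, transpose_mul, hFinv]
  simp only [Matrix.sub_mul, Matrix.mul_sub, Matrix.mul_assoc, mul_nonsing_inv_cancel_left F _ hF]
  abel

theorem mul_mul_transpose_le_mul_mul_transpose [Fintype n] {P Q : Matrix m m ℝ} (h : P ≤ Q)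
    (B : Matrix n m ℝ) : B * P * Bᵀ ≤ B * Q * Bᵀ := by
  rw [le_iff, ← Matrix.sub_mul, ← Matrix.mul_sub]
  simpa using (le_iff.mp h).mul_mul_conjTranspose_same B

theorem mul_mul_transpose_nonneg [Fintype n] {P : Matrix m m ℝ} (h : 0 ≤ P) (B : Matrix n m ℝ) :
    0 ≤ B * P * Bᵀ := by
  simpa only [Matrix.mul_zero, Matrix.zero_mul] using mul_mul_transpose_le_mul_mul_transpose h B

theorem trace_le_trace_of_le {P Q : Matrix m m ℝ} (h : P ≤ Q) : P.trace ≤ Q.trace := by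
  simpa [trace_sub] using (le_iff.mp h).trace_nonneg

end Matrix

open Matrix

section Update

variable {n m : Type*} [Fintype n] [Fintype m] {c : ℝ} {C : Matrix m n ℝ} {Θ D : Matrix m m ℝ}

noncomputable def innovation (c : ℝ) (C : Matrix m n ℝ) (Θ D d : Matrix m m ℝ)
    (P : Matrix n n ℝ) : Matrix m m ℝ :=
  Θ + D * d * Dᵀ + (1 + c) • (C * P * Cᵀ)

theorem innovation_posDef (hc : 0 ≤ 1 + c) (hΘ : Θ.PosDef) {d : Matrix m m ℝ}
    {P : Matrix n n ℝ} (hd : 0 ≤ d) (hP : 0 ≤ P) : (innovation c C Θ D d P).PosDef :=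
  (hΘ.add_posSemidef (mul_mul_transpose_nonneg hd D).posSemidef).add_posSemidef
    (smul_nonneg hc (mul_mul_transpose_nonneg hP C)).posSemidef

theorem innovation_mono (hc : 0 ≤ 1 + c) {d₁ d₂ : Matrix m m ℝ} {P₁ P₂ : Matrix n n ℝ}
    (hd : d₁ ≤ d₂) (hP : P₁ ≤ P₂) : innovation c C Θ D d₁ P₁ ≤ innovation c C Θ D d₂ P₂ :=
  add_le_add (add_le_add le_rfl (mul_mul_transpose_le_mul_mul_transpose hd D))
    (smul_le_smul_of_nonneg_left (mul_mul_transpose_le_mul_mul_transpose hP C) hc)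

variable [DecidableEq n]

noncomputable def gainCost (c : ℝ) (C : Matrix m n ℝ) (Θ D d : Matrix m m ℝ)
    (P : Matrix n n ℝ) (K : Matrix n m ℝ) : Matrix n n ℝ :=
  (1 + c) • ((1 - K * C) * P * (1 - K * C)ᵀ) + K * (Θ + D * d * Dᵀ) * Kᵀ

theorem gainCost_eq {d : Matrix m m ℝ} {P : Matrix n n ℝ} (hP : Pᵀ = P) (K : Matrix n m ℝ) :
    gainCost c C Θ D d P K = (1 + c) • P - K * ((1 + c) • (P * Cᵀ))ᵀ - (1 + c) • (P * Cᵀ) * Kᵀ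
      + K * innovation c C Θ D d P * Kᵀ := by
  simp only [gainCost, innovation, transpose_sub, transpose_one, transpose_mul, transpose_smul,
    hP, Matrix.sub_mul, Matrix.mul_sub, Matrix.add_mul, Matrix.mul_add, Matrix.one_mul,
    Matrix.mul_one, Matrix.smul_mul, Matrix.mul_smul, smul_sub, transpose_transpose,
    Matrix.mul_assoc]
  abel

theorem gainCost_nonneg (hc : 0 ≤ 1 + c) (hΘ : 0 ≤ Θ) {d : Matrix m m ℝ} {P : Matrix n n ℝ}
    (hd : 0 ≤ d) (hP : 0 ≤ P) (K : Matrix n m ℝ) : 0 ≤ gainCost c C Θ D d P K :=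
  add_nonneg (smul_nonneg hc (mul_mul_transpose_nonneg hP _))
    (mul_mul_transpose_nonneg (add_nonneg hΘ (mul_mul_transpose_nonneg hd D)) K)

theorem gainCost_mono (hc : 0 ≤ 1 + c) {d₁ d₂ : Matrix m m ℝ} {P₁ P₂ : Matrix n n ℝ}
    (hd : d₁ ≤ d₂) (hP : P₁ ≤ P₂) (K : Matrix n m ℝ) :
    gainCost c C Θ D d₁ P₁ K ≤ gainCost c C Θ D d₂ P₂ K :=
  add_le_add (smul_le_smul_of_nonneg_left (mul_mul_transpose_le_mul_mul_transpose hP _) hc)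
    (mul_mul_transpose_le_mul_mul_transpose
      (add_le_add le_rfl (mul_mul_transpose_le_mul_mul_transpose hd D)) K)

variable [DecidableEq m]

noncomputable def optimalGain (c : ℝ) (C : Matrix m n ℝ) (Θ D d : Matrix m m ℝ)
    (P : Matrix n n ℝ) : Matrix n m ℝ :=
  (1 + c) • (P * Cᵀ) * (innovation c C Θ D d P)⁻¹

noncomputable def minCost (c : ℝ) (C : Matrix m n ℝ) (Θ D d : Matrix m m ℝ)
    (P : Matrix n n ℝ) : Matrix n n ℝ :=
  (1 + c) • P - (1 + c) ^ 2 • (P * Cᵀ * (innovation c C Θ D d P)⁻¹ * C * P)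

theorem gainCost_eq_minCost_add {d : Matrix m m ℝ} {P : Matrix n n ℝ} (hP : Pᵀ = P)
    (hF : (innovation c C Θ D d P).PosDef) (K : Matrix n m ℝ) :
    gainCost c C Θ D d P K = minCost c C Θ D d P + (K - optimalGain c C Θ D d P)
      * innovation c C Θ D d P * (K - optimalGain c C Θ D d P)ᵀ := by
  set F := innovation c C Θ D d P
  have hFt : Fᵀ = F := transpose_eq_self_of_nonneg hF.posSemidef.nonneg
  have hG : (1 + c) • (P * Cᵀ) * F⁻¹ * ((1 + c) • (P * Cᵀ))ᵀ
      = (1 + c) ^ 2 • (P * Cᵀ * F⁻¹ * C * P) := by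
    simp only [transpose_smul, transpose_mul, transpose_transpose, hP, Matrix.smul_mul,
      Matrix.mul_smul, smul_smul, sq, Matrix.mul_assoc]
  rw [gainCost_eq hP, optimalGain,
    sub_mul_inv_mul_mul_transpose_sub_mul_inv hFt hF.det_pos.ne'.isUnit, hG, minCost]
  abel

theorem minCost_eq_gainCost_optimalGain {d : Matrix m m ℝ} {P : Matrix n n ℝ} (hP : Pᵀ = P)
    (hF : (innovation c C Θ D d P).PosDef) :
    minCost c C Θ D d P = gainCost c C Θ D d P (optimalGain c C Θ D d P) := by
  rw [gainCost_eq_minCost_add hP hF, sub_self, Matrix.zero_mul, Matrix.zero_mul, add_zero]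

theorem minCost_le_gainCost {d : Matrix m m ℝ} {P : Matrix n n ℝ} (hP : Pᵀ = P)
    (hF : (innovation c C Θ D d P).PosDef) (K : Matrix n m ℝ) :
    minCost c C Θ D d P ≤ gainCost c C Θ D d P K := by
  rw [gainCost_eq_minCost_add hP hF, le_add_iff_nonneg_right]
  exact mul_mul_transpose_nonneg hF.posSemidef.nonneg _

theorem minCost_nonneg (hc : 0 ≤ 1 + c) (hΘ : Θ.PosDef) {d : Matrix m m ℝ} {P : Matrix n n ℝ}
    (hd : 0 ≤ d) (hP : 0 ≤ P) : 0 ≤ minCost c C Θ D d P := by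
  rw [minCost_eq_gainCost_optimalGain (transpose_eq_self_of_nonneg hP)
    (innovation_posDef hc hΘ hd hP)]
  exact gainCost_nonneg hc hΘ.posSemidef.nonneg hd hP _

theorem minCost_mono (hc : 0 ≤ 1 + c) (hΘ : Θ.PosDef) {d₁ d₂ : Matrix m m ℝ}
    {P₁ P₂ : Matrix n n ℝ} (hd₁ : 0 ≤ d₁) (hd : d₁ ≤ d₂) (hP₁ : 0 ≤ P₁) (hP : P₁ ≤ P₂) :
    minCost c C Θ D d₁ P₁ ≤ minCost c C Θ D d₂ P₂ := by
  have hP₂ : 0 ≤ P₂ := hP₁.trans hP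
  calc minCost c C Θ D d₁ P₁
      ≤ gainCost c C Θ D d₁ P₁ (optimalGain c C Θ D d₂ P₂) :=
        minCost_le_gainCost (transpose_eq_self_of_nonneg hP₁) (innovation_posDef hc hΘ hd₁ hP₁) _
    _ ≤ gainCost c C Θ D d₂ P₂ (optimalGain c C Θ D d₂ P₂) := gainCost_mono hc hd hP _
    _ = minCost c C Θ D d₂ P₂ :=
        (minCost_eq_gainCost_optimalGain (transpose_eq_self_of_nonneg hP₂)
          (innovation_posDef hc hΘ (hd₁.trans hd) hP₂)).symm

variable {ι : Type*} [Fintype ι] {H : ι → Matrix n m ℝ} {β : ι → ℝ}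

noncomputable def riccatiUpdate (c : ℝ) (C : Matrix m n ℝ) (Θ D : Matrix m m ℝ)
    (H : ι → Matrix n m ℝ) (β : ι → ℝ) (d : Matrix m m ℝ) (P : Matrix n n ℝ) : Matrix n n ℝ :=
  minCost c C Θ D d P + ∑ ν, β ν • (H ν * innovation c C Θ D d P * (H ν)ᵀ)

theorem riccatiUpdate_nonneg (hc : 0 ≤ 1 + c) (hΘ : Θ.PosDef) (hβ : ∀ ν, 0 ≤ β ν)
    {d : Matrix m m ℝ} {P : Matrix n n ℝ} (hd : 0 ≤ d) (hP : 0 ≤ P) :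
    0 ≤ riccatiUpdate c C Θ D H β d P :=
  add_nonneg (minCost_nonneg hc hΘ hd hP) <| Finset.sum_nonneg fun ν _ => smul_nonneg (hβ ν)
    (mul_mul_transpose_nonneg (innovation_posDef hc hΘ hd hP).posSemidef.nonneg _)

theorem riccatiUpdate_mono (hc : 0 ≤ 1 + c) (hΘ : Θ.PosDef) (hβ : ∀ ν, 0 ≤ β ν)
    {d₁ d₂ : Matrix m m ℝ} {P₁ P₂ : Matrix n n ℝ} (hd₁ : 0 ≤ d₁) (hd : d₁ ≤ d₂) (hP₁ : 0 ≤ P₁)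
    (hP : P₁ ≤ P₂) : riccatiUpdate c C Θ D H β d₁ P₁ ≤ riccatiUpdate c C Θ D H β d₂ P₂ :=
  add_le_add (minCost_mono hc hΘ hd₁ hd hP₁ hP) <| Finset.sum_le_sum fun ν _ =>
    smul_le_smul_of_nonneg_left
      (mul_mul_transpose_le_mul_mul_transpose (innovation_mono hc hd hP) _) (hβ ν)

end Update

theorem updateδ_eq_riccatiUpdate {n m r : ℕ} (c : ℝ) (C : ℕ × ℕ → Matrix (Fin m) (Fin n) ℝ)
    (Θ₀ D : ℕ × ℕ → Matrix (Fin m) (Fin m) ℝ) (H : Fin r → Matrix (Fin n) (Fin m) ℝ)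
    (β : Fin r → ℝ) (δ : ℕ × ℕ → Matrix (Fin m) (Fin m) ℝ)
    (Ξp : ℕ × ℕ → Matrix (Fin n) (Fin n) ℝ) (p : ℕ × ℕ) :
    updateδ c C Θ₀ D H β δ Ξp p = riccatiUpdate c (C p) (Θ₀ p) (D p) H β (δ p) (Ξp p) :=
  rfl

section Prediction

variable {n : ℕ} {cb₁ cb₂ : ℝ} {A A₁ A₂ : ℕ × ℕ → Matrix (Fin n) (Fin n) ℝ} {a a₁ a₂ : ℕ × ℕ → ℝ}
  {M M₁ M₂ Q₁ Q₂ : ℕ × ℕ → Matrix (Fin n) (Fin n) ℝ}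

theorem predMap_nonneg (hcb₂ : 0 ≤ cb₂) {p : ℕ × ℕ} (hM : 0 ≤ M p) :
    0 ≤ predMap cb₂ A a M p :=
  add_nonneg
    (smul_nonneg (by have := hM.posSemidef.trace_nonneg; positivity) zero_le_one)
    (smul_nonneg (by positivity) (mul_mul_transpose_nonneg hM _))

theorem predMap_mono (hcb₂ : 0 ≤ cb₂) {p : ℕ × ℕ} (hM : M₁ p ≤ M₂ p) :
    predMap cb₂ A a M₁ p ≤ predMap cb₂ A a M₂ p :=
  add_le_add
    (smul_le_smul_of_nonneg_right (by gcongr; exact trace_le_trace_of_le hM) zero_le_one)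
    (smul_le_smul_of_nonneg_left (mul_mul_transpose_le_mul_mul_transpose hM _) (by positivity))

variable (cb₁ cb₂ A₁ A₂ a₁ a₂ Q₁ Q₂) in
noncomputable def prediction (M : ℕ × ℕ → Matrix (Fin n) (Fin n) ℝ) (l k : ℕ) :
    Matrix (Fin n) (Fin n) ℝ :=
  (1 + cb₁) • predMap cb₂ A₁ a₁ M (l, k - 1) + (1 + cb₁⁻¹) • predMap cb₂ A₂ a₂ M (l - 1, k)
    + Q₁ (l, k - 1) + Q₂ (l - 1, k)

theorem prediction_nonneg (hcb₁ : 0 ≤ cb₁) (hcb₂ : 0 ≤ cb₂) {l k : ℕ}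
    (hQ₁ : 0 ≤ Q₁ (l, k - 1)) (hQ₂ : 0 ≤ Q₂ (l - 1, k))
    (hM₁ : 0 ≤ M (l, k - 1)) (hM₂ : 0 ≤ M (l - 1, k)) :
    0 ≤ prediction cb₁ cb₂ A₁ A₂ a₁ a₂ Q₁ Q₂ M l k :=
  add_nonneg (add_nonneg (add_nonneg
    (smul_nonneg (by positivity) (predMap_nonneg hcb₂ hM₁))
    (smul_nonneg (by positivity) (predMap_nonneg hcb₂ hM₂))) hQ₁) hQ₂

theorem prediction_mono (hcb₁ : 0 ≤ cb₁) (hcb₂ : 0 ≤ cb₂) {l k : ℕ}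
    (hM₁ : M₁ (l, k - 1) ≤ M₂ (l, k - 1)) (hM₂ : M₁ (l - 1, k) ≤ M₂ (l - 1, k)) :
    prediction cb₁ cb₂ A₁ A₂ a₁ a₂ Q₁ Q₂ M₁ l k ≤ prediction cb₁ cb₂ A₁ A₂ a₁ a₂ Q₁ Q₂ M₂ l k := by
  unfold prediction
  gcongr
  · exact predMap_mono hcb₂ hM₁
  · exact predMap_mono hcb₂ hM₂

end Prediction

theorem Nat.grid_induction {P : ℕ × ℕ → Prop} (row : ∀ l, P (l, 0)) (col : ∀ k, P (0, k))
    (step : ∀ l k, 1 ≤ l → 1 ≤ k → P (l, k - 1) → P (l - 1, k) → P (l, k)) : ∀ p, P p := by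
  rintro ⟨l, k⟩
  induction l generalizing k with
  | zero => exact col k
  | succ l ihl =>
    induction k with
    | zero => exact row _
    | succ k ihk => exact step _ _ (by omega) (by omega) ihk (ihl _)

theorem filter_bound_monotone_in_trigger_error_general
    {n m r : ℕ}
    (c cb₁ cb₂ : ℝ) (hc : 0 < c) (hcb₁ : 0 < cb₁) (hcb₂ : 0 < cb₂)
    (A₁ A₂ : ℕ × ℕ → Matrix (Fin n) (Fin n) ℝ)
    (a₁ a₂ : ℕ × ℕ → ℝ)
    (Q₁ Q₂ : ℕ × ℕ → Matrix (Fin n) (Fin n) ℝ)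
    (hQ₁ : ∀ p, (Q₁ p).PosSemidef) (hQ₂ : ∀ p, (Q₂ p).PosSemidef)
    (C : ℕ × ℕ → Matrix (Fin m) (Fin n) ℝ)
    (Θ₀ : ℕ × ℕ → Matrix (Fin m) (Fin m) ℝ) (hΘ₀ : ∀ p, (Θ₀ p).PosDef)
    (D : ℕ × ℕ → Matrix (Fin m) (Fin m) ℝ)
    (H : Fin r → Matrix (Fin n) (Fin m) ℝ)
    (β : Fin r → ℝ) (hβ : ∀ ν, 0 ≤ β ν)
    (Gh Gv : ℕ → Matrix (Fin n) (Fin n) ℝ)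
    (hGh : ∀ l, (Gh l).PosSemidef) (hGv : ∀ k, (Gv k).PosSemidef)
    (δ₁ δ₂ : ℕ × ℕ → Matrix (Fin m) (Fin m) ℝ)
    (hδ₁ : ∀ p, (δ₁ p).PosSemidef)
    (hδ : ∀ p, (δ₂ p - δ₁ p).PosSemidef)
    (Ξp₁ Ξu₁ Ξp₂ Ξu₂ : ℕ × ℕ → Matrix (Fin n) (Fin n) ℝ)
    (hbd₁h : ∀ l : ℕ, Ξu₁ (l, 0) = Gh l) (hbd₁v : ∀ k : ℕ, Ξu₁ (0, k) = Gv k)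
    (hbd₂h : ∀ l : ℕ, Ξu₂ (l, 0) = Gh l) (hbd₂v : ∀ k : ℕ, Ξu₂ (0, k) = Gv k)
    (hp₁ : ∀ l k : ℕ, 1 ≤ l → 1 ≤ k →
      Ξp₁ (l, k) = (1 + cb₁) • predMap cb₂ A₁ a₁ Ξu₁ (l, k - 1)
        + (1 + cb₁⁻¹) • predMap cb₂ A₂ a₂ Ξu₁ (l - 1, k)
        + Q₁ (l, k - 1) + Q₂ (l - 1, k))
    (hp₂ : ∀ l k : ℕ, 1 ≤ l → 1 ≤ k →
      Ξp₂ (l, k) = (1 + cb₁) • predMap cb₂ A₁ a₁ Ξu₂ (l, k - 1)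
        + (1 + cb₁⁻¹) • predMap cb₂ A₂ a₂ Ξu₂ (l - 1, k)
        + Q₁ (l, k - 1) + Q₂ (l - 1, k))
    (hu₁ : ∀ l k : ℕ, 1 ≤ l → 1 ≤ k →
      Ξu₁ (l, k) = updateδ c C Θ₀ D H β δ₁ Ξp₁ (l, k))
    (hu₂ : ∀ l k : ℕ, 1 ≤ l → 1 ≤ k →
      Ξu₂ (l, k) = updateδ c C Θ₀ D H β δ₂ Ξp₂ (l, k)) :
    ∀ p : ℕ × ℕ, (Ξu₂ p - Ξu₁ p).PosSemidef := by
  have hc' : 0 ≤ 1 + c := by linarith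
  suffices h : ∀ p, 0 ≤ Ξu₁ p ∧ Ξu₁ p ≤ Ξu₂ p from fun p => (h p).2
  refine Nat.grid_induction (fun l => ?_) (fun k => ?_) fun l k hl hk ih₁ ih₂ => ?_
  · rw [hbd₁h, hbd₂h]
    exact ⟨(hGh l).nonneg, le_rfl⟩
  · rw [hbd₁v, hbd₂v]
    exact ⟨(hGv k).nonneg, le_rfl⟩
  have hΞp₁ : 0 ≤ Ξp₁ (l, k) := by
    rw [hp₁ l k hl hk]
    exact prediction_nonneg hcb₁.le hcb₂.le (hQ₁ _).nonneg (hQ₂ _).nonneg ih₁.1 ih₂.1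
  have hΞp : Ξp₁ (l, k) ≤ Ξp₂ (l, k) := by
    rw [hp₁ l k hl hk, hp₂ l k hl hk]
    exact prediction_mono hcb₁.le hcb₂.le ih₁.2 ih₂.2
  rw [hu₁ l k hl hk, hu₂ l k hl hk, updateδ_eq_riccatiUpdate, updateδ_eq_riccatiUpdate]
  exact ⟨riccatiUpdate_nonneg hc' (hΘ₀ _) hβ (hδ₁ _).nonneg hΞp₁,
    riccatiUpdate_mono hc' (hΘ₀ _) hβ (hδ₁ _).nonneg (hδ _) hΞp₁ hΞp⟩

/-- Monotonicity of the minimized filtering-error covariance bound of the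
event-triggered recursive filter for the 2-D system with respect to the
triggering-error covariance bound: if `δ¹(l,k) ⪯ δ²(l,k)` for all `(l,k)`, then
the recursively defined bounds satisfy `Ξ_u^{δ¹}(l,k) ⪯ Ξ_u^{δ²}(l,k)` everywhere. -/
theorem filter_bound_monotone_in_trigger_error
    {n m r : ℕ} (hn : 1 ≤ n) (hm : 1 ≤ m)
    (c cb₁ cb₂ : ℝ) (hc : 0 < c) (hcb₁ : 0 < cb₁) (hcb₂ : 0 < cb₂)
    (A₁ A₂ : ℕ × ℕ → Matrix (Fin n) (Fin n) ℝ)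
    (a₁ a₂ : ℕ × ℕ → ℝ) (ha₁ : ∀ p, 0 ≤ a₁ p) (ha₂ : ∀ p, 0 ≤ a₂ p)
    (Q₁ Q₂ : ℕ × ℕ → Matrix (Fin n) (Fin n) ℝ)
    (hQ₁ : ∀ p, (Q₁ p).PosSemidef) (hQ₂ : ∀ p, (Q₂ p).PosSemidef)
    (C : ℕ × ℕ → Matrix (Fin m) (Fin n) ℝ)
    (Θ₀ : ℕ × ℕ → Matrix (Fin m) (Fin m) ℝ) (hΘ₀ : ∀ p, (Θ₀ p).PosDef)
    (D : ℕ × ℕ → Matrix (Fin m) (Fin m) ℝ)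
    (H : Fin r → Matrix (Fin n) (Fin m) ℝ)
    (β : Fin r → ℝ) (hβ : ∀ ν, 0 ≤ β ν)
    (Gh Gv : ℕ → Matrix (Fin n) (Fin n) ℝ)
    (hGh : ∀ l, (Gh l).PosSemidef) (hGv : ∀ k, (Gv k).PosSemidef)
    (δ₁ δ₂ : ℕ × ℕ → Matrix (Fin m) (Fin m) ℝ)
    (hδ₁ : ∀ p, (δ₁ p).PosSemidef) (hδ₂ : ∀ p, (δ₂ p).PosSemidef)
    (hδ : ∀ p, (δ₂ p - δ₁ p).PosSemidef)
    (Ξp₁ Ξu₁ Ξp₂ Ξu₂ : ℕ × ℕ → Matrix (Fin n) (Fin n) ℝ)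
    (hbd₁h : ∀ l : ℕ, Ξu₁ (l, 0) = Gh l) (hbd₁v : ∀ k : ℕ, Ξu₁ (0, k) = Gv k)
    (hbd₂h : ∀ l : ℕ, Ξu₂ (l, 0) = Gh l) (hbd₂v : ∀ k : ℕ, Ξu₂ (0, k) = Gv k)
    (hp₁ : ∀ l k : ℕ, 1 ≤ l → 1 ≤ k →
      Ξp₁ (l, k) = (1 + cb₁) • predMap cb₂ A₁ a₁ Ξu₁ (l, k - 1)
        + (1 + cb₁⁻¹) • predMap cb₂ A₂ a₂ Ξu₁ (l - 1, k)
        + Q₁ (l, k - 1) + Q₂ (l - 1, k))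
    (hp₂ : ∀ l k : ℕ, 1 ≤ l → 1 ≤ k →
      Ξp₂ (l, k) = (1 + cb₁) • predMap cb₂ A₁ a₁ Ξu₂ (l, k - 1)
        + (1 + cb₁⁻¹) • predMap cb₂ A₂ a₂ Ξu₂ (l - 1, k)
        + Q₁ (l, k - 1) + Q₂ (l - 1, k))
    (hu₁ : ∀ l k : ℕ, 1 ≤ l → 1 ≤ k →
      Ξu₁ (l, k) = updateδ c C Θ₀ D H β δ₁ Ξp₁ (l, k))
    (hu₂ : ∀ l k : ℕ, 1 ≤ l → 1 ≤ k →
      Ξu₂ (l, k) = updateδ c C Θ₀ D H β δ₂ Ξp₂ (l, k)) :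
    ∀ p : ℕ × ℕ, (Ξu₂ p - Ξu₁ p).PosSemidef :=
  filter_bound_monotone_in_trigger_error_general c cb₁ cb₂ hc hcb₁ hcb₂ A₁ A₂ a₁ a₂ Q₁ Q₂ hQ₁ hQ₂ C
    Θ₀ hΘ₀ D H β hβ Gh Gv hGh hGv δ₁ δ₂ hδ₁ hδ Ξp₁ Ξu₁ Ξp₂ Ξu₂ hbd₁h hbd₁v hbd₂h hbd₂v hp₁ hp₂ hu₁
    hu₂
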